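/- arXiv:1906.00492 — 4 statements merged into one kernel-verified Lean document; each statement's English description precedes it below -/
import Mathlib

section
/- For every dimension d ∈ ℕ (d ≥ 1), every norm ρ on ℝ^d, and every function f : (0,∞) → [0,1] with f(R) → 0 as R → ∞, there exist a set A ⊆ ℝ^d (which may be taken open, hence measurable) and a strictly increasing sequence of positive reals R_n → ∞ such that: (i) ρ(x − y) ≠ R_n for all x, y ∈ A and all n ∈ ℕ, and (ii) μ(A ∩ B^ρ_{R_n}) ≥ f(R_n) · μ(B^ρ_{R_n}) for all n ∈ ℕ. -/
/-!
`A` is a union of layers, built recursively together with the radii. Before each layer there is a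
guard radius `L`: the earlier layers lie in `B_L` and all radii chosen so far are at most `L`. The
new layer is a union of `K^d` unit `ρ`-balls centred on a cubic grid whose mesh and distance from
the origin are large compared with `L`, so two of its points are less than `2` apart if they lie in
one ball, and more than `L` apart otherwise or when the second point lies in `B_L`. Thus the layer
creates no distance in `[2, L]`, and it lies in `B_{R/2}` for `R = 2CK` with `C` depending on `L`
only; every later distance then avoids `R`, which becomes the next radius and the next guard. The
layer fills the proportion `(2C)^{-d}` of `B_R`, which exceeds `f R` once `K` is large, as `f → 0`.
-/

open MeasureTheory Filter Set
open scoped ENNReal Topology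

namespace Seminorm

variable {E : Type*} [NormedAddCommGroup E] [NormedSpace ℝ E]

theorem continuous_of_finiteDimensional [FiniteDimensional ℝ E] (p : Seminorm ℝ E) :
    Continuous p :=
  continuousOn_univ.mp (p.convexOn.continuousOn isOpen_univ)

theorem exists_pos_mul_norm_le [FiniteDimensional ℝ E] (p : Seminorm ℝ E)
    (hp : ∀ x, x ≠ 0 → 0 < p x) : ∃ a, 0 < a ∧ ∀ x, a * ‖x‖ ≤ p x := by
  cases subsingleton_or_nontrivial E
  · exact ⟨1, one_pos, fun x => by simp [Subsingleton.elim x 0]⟩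
  obtain ⟨x₀, hx₀, hmin⟩ := (isCompact_sphere (0 : E) 1).exists_isMinOn
    (NormedSpace.sphere_nonempty.mpr zero_le_one) p.continuous_of_finiteDimensional.continuousOn
  refine ⟨p x₀, hp x₀ (ne_zero_of_mem_unit_sphere ⟨x₀, hx₀⟩), fun x => ?_⟩
  rcases eq_or_ne x 0 with rfl | hx
  · simp
  have hnx : 0 < ‖x‖ := norm_pos_iff.mpr hx
  have := hmin (show ‖x‖⁻¹ • x ∈ Metric.sphere (0 : E) 1 by simp [norm_smul, hnx.ne'])
  rw [mem_ofPred_eq, map_smul_eq_mul, norm_inv, norm_norm, inv_mul_eq_div, le_div_iff₀ hnx] at this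
  linarith

theorem sub_lt_map_sub_of_mem_ball (p : Seminorm ℝ E) {x y c c' : E} {r r' : ℝ}
    (hx : x ∈ p.ball c r) (hy : y ∈ p.ball c' r') : p (c - c') - (r + r') < p (x - y) := by
  rw [mem_ball] at hx hy
  have : p (c - c') ≤ p (c - x) + p (x - y) + p (y - c') := by
    calc p (c - c') = p ((c - x) + (x - y) + (y - c')) := by abel_nf
      _ ≤ _ := (map_add_le_add p _ _).trans (add_le_add_left (map_add_le_add p _ _) _)
  rw [map_sub_rev p c x] at this
  linarith

theorem map_sub_lt_of_mem_ball (p : Seminorm ℝ E) {x y c : E} {r r' : ℝ}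
    (hx : x ∈ p.ball c r) (hy : y ∈ p.ball c r') : p (x - y) < r + r' := by
  rw [mem_ball] at hx hy
  calc p (x - y) ≤ p (x - c) + p (y - c) := by
        simpa only [sub_sub_sub_cancel_right] using map_sub_le_add p (x - c) (y - c)
    _ < r + r' := add_lt_add hx hy

theorem isOpen_ball [FiniteDimensional ℝ E] (p : Seminorm ℝ E) (c : E) (r : ℝ) :
    IsOpen (p.ball c r) :=
  isOpen_lt (p.continuous_of_finiteDimensional.comp (continuous_id.sub continuous_const))
    continuous_const

theorem map_sub_ne_of_layers (p : Seminorm ℝ E) {r : ℕ → ℝ} {B : ℕ → Set E}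
    (hr : Monotone r) (hr2 : ∀ n, 2 ≤ r n) (hB : ∀ n, B n ⊆ p.ball 0 (r n / 2))
    (havoid : ∀ n, ∀ x ∈ B (n + 1), ∀ y ∈ p.ball 0 (r n) ∪ B (n + 1), p (x - y) ∉ Icc 2 (r n))
    (k : ℕ) {x y : E} (hx : x ∈ ⋃ n, B n) (hy : y ∈ ⋃ n, B n) : p (x - y) ≠ r k := by
  obtain ⟨i, hxi⟩ := mem_iUnion.mp hx
  obtain ⟨j, hyj⟩ := mem_iUnion.mp hy
  wlog hji : j ≤ i generalizing x y i j
  · rw [map_sub_rev]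
    exact this hy hx j hyj i hxi (le_of_not_ge hji)
  rcases le_or_gt i k with hik | hki
  · refine ne_of_lt ?_
    have hxi' := p.mem_ball_zero.mp (hB i hxi)
    have hyj' := p.mem_ball_zero.mp (hB j hyj)
    linarith [map_sub_le_add p x y, hr hji, hr hik]
  obtain ⟨m, rfl⟩ := Nat.exists_eq_add_one_of_ne_zero (Nat.ne_zero_of_lt hki)
  have hy' : y ∈ p.ball 0 (r m) ∪ B (m + 1) := by
    rcases hji.lt_or_eq with hjm | rfl
    · refine Or.inl (p.mem_ball_zero.mpr ?_)
      linarith [p.mem_ball_zero.mp (hB j hyj), hr (Nat.le_of_lt_succ hjm), hr2 j]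
    · exact Or.inr hyj
  exact fun h => havoid m x hxi y hy' (h ▸ ⟨hr2 k, hr (Nat.le_of_lt_succ hki)⟩)

variable [MeasurableSpace E] [BorelSpace E] [FiniteDimensional ℝ E] (μ : Measure E)
  [μ.IsAddHaarMeasure] (p : Seminorm ℝ E)

theorem addHaar_ball_zero {r : ℝ} (hr : 0 < r) :
    μ (p.ball 0 r) = ENNReal.ofReal (r ^ Module.finrank ℝ E) * μ (p.ball 0 1) := by
  rw [← Measure.addHaar_smul_of_nonneg μ hr.le, smul_ball_zero hr.ne', Real.norm_of_nonneg hr.le,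
    mul_one]

theorem addHaar_ball (c : E) (r : ℝ) : μ (p.ball c r) = μ (p.ball 0 r) := by
  rw [← measure_vadd μ c (p.ball 0 r), vadd_ball, vadd_eq_add, add_zero]

theorem addHaar_iUnion_ball {ι : Type*} [Fintype ι] {c : ι → E} {r : ℝ}
    (hc : Pairwise fun i j => 2 * r ≤ p (c i - c j)) :
    μ (⋃ i, p.ball (c i) r) = Fintype.card ι * μ (p.ball 0 r) := by
  rw [measure_iUnion (fun i j hij => ?_) fun i => (p.isOpen_ball _ _).measurableSet]
  · simp [addHaar_ball]
  refine Set.disjoint_left.mpr fun x hxi hxj => ?_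
  have := p.sub_lt_map_sub_of_mem_ball hxi hxj
  rw [sub_self, map_zero] at this
  linarith [hc hij]

end Seminorm

namespace EuclideanSpace

variable {ι : Type*} [Fintype ι]

theorem one_le_norm_toLp_intCast {z : ι → ℤ} (hz : z ≠ 0) :
    1 ≤ ‖(WithLp.toLp 2 fun i => (z i : ℝ) : EuclideanSpace ℝ ι)‖ := by
  obtain ⟨i, hi⟩ := Function.ne_iff.mp hz
  calc (1 : ℝ) ≤ |(z i : ℝ)| := by exact_mod_cast Int.one_le_abs hi
    _ ≤ _ := PiLp.norm_apply_le (WithLp.toLp 2 fun i => (z i : ℝ)) i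

theorem norm_toLp_le {x : ι → ℝ} {B : ℝ} (hB : 0 ≤ B) (hx : ∀ i, |x i| ≤ B) :
    ‖(WithLp.toLp 2 x : EuclideanSpace ℝ ι)‖ ≤ √(Fintype.card ι) * B := by
  rw [EuclideanSpace.norm_eq, ← Real.sqrt_sq hB, ← Real.sqrt_mul (Nat.cast_nonneg _)]
  refine Real.sqrt_le_sqrt ?_
  calc ∑ i, ‖x i‖ ^ 2 ≤ ∑ _i : ι, B ^ 2 := by
        gcongr with i
        rw [Real.norm_eq_abs]
        exact hx i
    _ = _ := by simp

end EuclideanSpace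

namespace Seminorm

variable {ι : Type*} [Fintype ι] (p : Seminorm ℝ (EuclideanSpace ℝ ι))

theorem mul_le_map_smul_toLp_intCast {a M : ℝ} (ha : ∀ x, a * ‖x‖ ≤ p x) (ha₀ : 0 ≤ a)
    (hM : 0 ≤ M) {z : ι → ℤ} (hz : z ≠ 0) :
    a * M ≤ p (M • WithLp.toLp 2 fun i => (z i : ℝ)) := by
  rw [map_smul_eq_mul, Real.norm_of_nonneg hM, mul_comm]
  gcongr
  exact (le_mul_of_one_le_right ha₀ (EuclideanSpace.one_le_norm_toLp_intCast hz)).trans (ha _)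

theorem exists_separated_grid [Nonempty ι] (hp : ∀ x, x ≠ 0 → 0 < p x) (s : ℝ) :
    ∃ C, ∀ K : ℕ, ∃ c : (ι → Fin K) → EuclideanSpace ℝ ι,
      (∀ v, s ≤ p (c v)) ∧ (Pairwise fun v w => s ≤ p (c v - c w)) ∧ ∀ v, p (c v) ≤ C * K := by
  obtain ⟨a, ha, hpa⟩ := p.exists_pos_mul_norm_le hp
  obtain ⟨b, hb, hpb⟩ := p.bound_of_continuous_normedSpace p.continuous_of_finiteDimensional
  set M := |s| / a
  have hM : 0 ≤ M := by positivity
  have hlattice : ∀ z : ι → ℤ, z ≠ 0 → s ≤ p (M • WithLp.toLp 2 fun i => (z i : ℝ)) :=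
    fun z hz => (le_abs_self s).trans <| by
      simpa only [M, mul_div_cancel₀ _ ha.ne'] using p.mul_le_map_smul_toLp_intCast hpa ha.le hM hz
  refine ⟨M * b * √(Fintype.card ι) * 2, fun K => ?_⟩
  -- the offset `K + 1` makes every centre a nonzero lattice point, hence far from `0`
  set z : (ι → Fin K) → ι → ℤ := fun v i => K + 1 + (v i : ℕ)
  have hz_pos : ∀ v i, 0 < z v i := fun v i => by positivity
  refine ⟨fun v => M • WithLp.toLp 2 fun i => (z v i : ℝ), fun v => ?_, fun v w hvw => ?_,
    fun v => ?_⟩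
  · obtain ⟨i⟩ := ‹Nonempty ι›
    exact hlattice (z v) (Function.ne_iff.mpr ⟨i, (hz_pos v i).ne'⟩)
  · have hne : z v - z w ≠ 0 := by
      obtain ⟨i, hi⟩ := Function.ne_iff.mp hvw
      refine Function.ne_iff.mpr ⟨i, sub_ne_zero.mpr fun h => hi (Fin.ext ?_)⟩
      simpa [z] using h
    convert hlattice _ hne using 1
    rw [← smul_sub, ← WithLp.toLp_sub]
    simp only [z, Pi.sub_apply, Int.cast_sub]
    rfl
  · have hzK : ∀ i, |(z v i : ℝ)| ≤ 2 * K := fun i => by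
      rw [abs_of_pos (by exact_mod_cast hz_pos v i)]
      have : ((v i : ℕ) : ℝ) + 1 ≤ K := by exact_mod_cast (v i).isLt
      simp only [z]
      push_cast
      linarith
    rw [map_smul_eq_mul, Real.norm_of_nonneg hM]
    calc M * p _ ≤ M * (b * (√(Fintype.card ι) * (2 * K))) := by
          gcongr
          exact (hpb _).trans (mul_le_mul_of_nonneg_left
            (EuclideanSpace.norm_toLp_le (by positivity) hzK) hb.le)
      _ = _ := by ring

variable [Nonempty ι] (hp : ∀ x, x ≠ 0 → 0 < p x) (μ : Measure (EuclideanSpace ℝ ι))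
  [μ.IsAddHaarMeasure]
include hp

theorem exists_sparse_layer (L : ℝ) :
    ∃ C, 1 ≤ C ∧ ∀ K : ℕ, 1 ≤ K → ∃ B, IsOpen B ∧ B ⊆ p.ball 0 (C * K) ∧
      (K : ℝ≥0∞) ^ Fintype.card ι * μ (p.ball 0 1) ≤ μ B ∧
      ∀ x ∈ B, ∀ y ∈ p.ball 0 L ∪ B, p (x - y) ∉ Icc 2 L := by
  classical
  obtain ⟨C, hC⟩ := p.exists_separated_grid hp (2 * |L| + 3)
  refine ⟨max C 0 + 1, by simp, fun K hK => ?_⟩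
  obtain ⟨c, hc_far, hc_sep, hc_near⟩ := hC K
  refine ⟨⋃ v, p.ball (c v) 1, isOpen_iUnion fun v => p.isOpen_ball _ _, ?_, ?_, ?_⟩
  · simp only [iUnion_subset_iff]
    intro v x hx
    rw [mem_ball_zero]
    rw [mem_ball] at hx
    have hK' : (1 : ℝ) ≤ K := by exact_mod_cast hK
    calc p x ≤ p (x - c v) + p (c v) := by simpa using map_add_le_add p (x - c v) (c v)
      _ < 1 + C * K := add_lt_add_of_lt_of_le hx (hc_near v)
      _ ≤ (max C 0 + 1) * K := by nlinarith [le_max_left C 0, le_max_right C 0]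
  · rw [p.addHaar_iUnion_ball μ fun v w hvw => by linarith [hc_sep hvw, abs_nonneg L]]
    simp
  · simp only [mem_iUnion, mem_union, mem_Icc, not_and_or, not_le]
    rintro x ⟨v, hxv⟩ y (hy | ⟨w, hyw⟩)
    · have := p.sub_lt_map_sub_of_mem_ball hxv hy
      rw [sub_zero] at this
      exact Or.inr (by linarith [hc_far v, le_abs_self L])
    · rcases eq_or_ne v w with rfl | hvw
      · exact Or.inl (by linarith [p.map_sub_lt_of_mem_ball hxv hyw])
      · exact Or.inr (by linarith [p.sub_lt_map_sub_of_mem_ball hxv hyw,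
          (hc_sep hvw : 2 * |L| + 3 ≤ p (c v - c w)), le_abs_self L, abs_nonneg L])

theorem exists_sparse_layer_of_tendsto {f : ℝ → ℝ} (hf : Tendsto f atTop (𝓝 0)) (L : ℝ) :
    ∃ R, L + 1 ≤ R ∧ ∃ B, IsOpen B ∧ B ⊆ p.ball 0 (R / 2) ∧
      (∀ x ∈ B, ∀ y ∈ p.ball 0 L ∪ B, p (x - y) ∉ Icc 2 L) ∧
      ENNReal.ofReal (f R) * μ (p.ball 0 R) ≤ μ B := by
  obtain ⟨C, hC, hlayer⟩ := p.exists_sparse_layer hp μ L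
  set n := Fintype.card ι
  have hδ : 0 < ((2 * C) ^ n)⁻¹ := by positivity
  obtain ⟨T, hT⟩ := eventually_atTop.mp (hf.eventually (gt_mem_nhds hδ))
  obtain ⟨K, hK⟩ := exists_nat_ge (max (max T (L + 1)) 1)
  have hK1 : (1 : ℝ) ≤ K := le_of_max_le_right hK
  obtain ⟨B, hBopen, hBsub, hBvol, hBavoid⟩ := hlayer K (by exact_mod_cast hK1)
  set R := 2 * C * K
  have hKR : (K : ℝ) ≤ R := by nlinarith
  have hR : 0 < R := by positivity
  refine ⟨R, by linarith [le_max_right T (L + 1), le_of_max_le_left hK], B, hBopen,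
    by rwa [show R / 2 = C * K by ring], hBavoid, ?_⟩
  have hfR : f R * R ^ n ≤ (K : ℝ) ^ n := by
    calc f R * R ^ n ≤ ((2 * C) ^ n)⁻¹ * R ^ n := by
          gcongr
          exact (hT R (by linarith [le_max_left T (L + 1), le_of_max_le_left hK])).le
      _ = (K : ℝ) ^ n := by
          rw [show R = 2 * C * K from rfl, mul_pow (2 * C), inv_mul_cancel_left₀ (by positivity)]
  calc ENNReal.ofReal (f R) * μ (p.ball 0 R)
      = ENNReal.ofReal (f R * R ^ n) * μ (p.ball 0 1) := by
        rw [p.addHaar_ball_zero μ hR, finrank_euclideanSpace, ← mul_assoc,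
          ENNReal.ofReal_mul' (by positivity)]
    _ ≤ (K : ℝ≥0∞) ^ n * μ (p.ball 0 1) := by
        gcongr
        rw [← ENNReal.ofReal_natCast, ← ENNReal.ofReal_pow (Nat.cast_nonneg K)]
        exact ENNReal.ofReal_le_ofReal hfR
    _ ≤ μ B := hBvol

theorem exists_isOpen_forall_map_sub_ne {f : ℝ → ℝ} (hf : Tendsto f atTop (𝓝 0)) :
    ∃ (A : Set (EuclideanSpace ℝ ι)) (r : ℕ → ℝ), IsOpen A ∧ StrictMono r ∧ (∀ n, 0 < r n) ∧
      Tendsto r atTop atTop ∧ (∀ n, ∀ x ∈ A, ∀ y ∈ A, p (x - y) ≠ r n) ∧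
      ∀ n, ENNReal.ofReal (f (r n)) * μ (p.ball 0 (r n)) ≤ μ (A ∩ p.ball 0 (r n)) := by
  choose R hR B hBopen hBsub hBavoid hBvol using p.exists_sparse_layer_of_tendsto hp μ hf
  -- the guard radius of the `n`-th layer is `R^[n] 1`, and `r n = R^[n + 1] 1`
  set r : ℕ → ℝ := fun n => R (R^[n] 1)
  have hr_guard : ∀ n, R^[n + 1] 1 = r n := fun n => Function.iterate_succ_apply' R n 1
  have hr_step : ∀ n, r n + 1 ≤ r (n + 1) := fun n => by
    simpa only [← hr_guard n] using hR (R^[n + 1] 1)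
  have hr_mono : StrictMono r := strictMono_nat_of_lt_succ fun n => by linarith [hr_step n]
  have hr_ge : ∀ n : ℕ, (n : ℝ) + 2 ≤ r n := fun n => by
    induction n with
    | zero => norm_num [r]; linarith [hR 1]
    | succ n ih => push_cast; linarith [hr_step n]
  have hr2 : ∀ n, 2 ≤ r n := fun n => by linarith [hr_ge n, (Nat.cast_nonneg n : (0 : ℝ) ≤ n)]
  set layer : ℕ → Set (EuclideanSpace ℝ ι) := fun n => B (R^[n] 1)
  have hlayer_sub : ∀ n, layer n ⊆ p.ball 0 (r n) := fun n =>
    (hBsub _).trans (p.ball_mono (by linarith [hr2 n]))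
  refine ⟨⋃ n, layer n, r, isOpen_iUnion fun n => hBopen _, hr_mono, fun n => by linarith [hr2 n],
    tendsto_atTop_mono (fun n => by linarith [hr_ge n]) tendsto_natCast_atTop_atTop,
    fun k x hx y hy => p.map_sub_ne_of_layers hr_mono.monotone hr2 (fun n => hBsub _)
      (fun n => by simpa only [layer, hr_guard n] using hBavoid (R^[n + 1] 1)) k hx hy,
    fun n => (hBvol _).trans (measure_mono (subset_inter (subset_iUnion layer n) (hlayer_sub n)))⟩

end Seminorm

theorem slow_decay_avoiding_distances_general (d : ℕ) (hd : 1 ≤ d)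
    (ρ : EuclideanSpace ℝ (Fin d) → ℝ)
    (hρ_pos : ∀ x, x ≠ 0 → 0 < ρ x)
    (hρ_smul : ∀ (c : ℝ) (x), ρ (c • x) = |c| * ρ x)
    (hρ_tri : ∀ x y, ρ (x + y) ≤ ρ x + ρ y)
    (f : ℝ → ℝ)
    (hf_lim : Tendsto f atTop (nhds 0)) :
    ∃ (A : Set (EuclideanSpace ℝ (Fin d))) (R : ℕ → ℝ),
      IsOpen A ∧
      StrictMono R ∧
      (∀ n, 0 < R n) ∧
      Tendsto R atTop atTop ∧
      (∀ n, ∀ x ∈ A, ∀ y ∈ A, ρ (x - y) ≠ R n) ∧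
      (∀ n, ENNReal.ofReal (f (R n)) * volume {x | ρ x < R n} ≤
        volume (A ∩ {x | ρ x < R n})) := by
  have : Nonempty (Fin d) := ⟨⟨0, hd⟩⟩
  let p : Seminorm ℝ (EuclideanSpace ℝ (Fin d)) :=
    Seminorm.of ρ hρ_tri fun c x => by rw [hρ_smul, Real.norm_eq_abs]
  have h := p.exists_isOpen_forall_map_sub_ne hρ_pos volume hf_lim
  simp only [p.ball_zero_eq] at h
  exact h

/-- For every dimension `d ≥ 1`, every norm `ρ` on `ℝ^d`, and every
function `f : (0,∞) → [0,1]` with `f(R) → 0` as `R → ∞`, there exist an open set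
`A ⊆ ℝ^d` and a strictly increasing sequence of positive reals `R n → ∞` such that
`ρ (x - y) ≠ R n` for all `x, y ∈ A` and all `n`, and
`μ(A ∩ B^ρ_{R n}) ≥ f (R n) · μ(B^ρ_{R n})` for all `n`. -/
theorem slow_decay_avoiding_distances (d : ℕ) (hd : 1 ≤ d)
    (ρ : EuclideanSpace ℝ (Fin d) → ℝ)
    (hρ_pos : ∀ x, x ≠ 0 → 0 < ρ x)
    (hρ_smul : ∀ (c : ℝ) (x), ρ (c • x) = |c| * ρ x)
    (hρ_tri : ∀ x y, ρ (x + y) ≤ ρ x + ρ y)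
    (f : ℝ → ℝ)
    (hf_range : ∀ R : ℝ, 0 < R → 0 ≤ f R ∧ f R ≤ 1)
    (hf_lim : Tendsto f atTop (nhds 0)) :
    ∃ (A : Set (EuclideanSpace ℝ (Fin d))) (R : ℕ → ℝ),
      IsOpen A ∧
      StrictMono R ∧
      (∀ n, 0 < R n) ∧
      Tendsto R atTop atTop ∧
      (∀ n, ∀ x ∈ A, ∀ y ∈ A, ρ (x - y) ≠ R n) ∧
      (∀ n, ENNReal.ofReal (f (R n)) * volume {x | ρ x < R n} ≤
        volume (A ∩ {x | ρ x < R n})) :=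
  slow_decay_avoiding_distances_general d hd ρ hρ_pos hρ_smul hρ_tri f hf_lim
end

section
/- For every dimension d ∈ ℕ (d ≥ 1) and every function f : (0,∞) → [0,1] with f(R) → 0 as R → ∞, there exist a set A ⊆ ℝ^d (which may be taken open, hence measurable) and a strictly increasing sequence of positive reals R_n → ∞ such that ‖x − y‖ ≠ R_n for all x, y ∈ A and all n ∈ ℕ (where ‖·‖ is the Euclidean norm), and μ(A ∩ B_{R_n}) ≥ f(R_n) · μ(B_{R_n}) for all n ∈ ℕ. -/
/-!
Two points of `band p s = ⋃ z : ℤ, (z p, z p + s)` are either in the same cell, at distance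
`< s`, or at distance `> p - s`. Hence a subset of `ℝ^d` whose coordinates all lie in
`band p s` avoids the distance `p / 2` once `√d s < p / 2 ≤ p - s`, which holds for the period
`p = c s` with `c = 2 (d + 1)`.

Take scales `s (n + 1) = K n · c s n` with `K n ≥ 1` integers, so that every period divides the
later ones. The set `layer (n + 1) ⊆ (0, s (n + 1))` consists of `K n` disjoint translates of
`layer n` by multiples of the period `c s n`; by divisibility it stays inside every band, and its
length is `s n / cⁿ`. So `A = ⋃ₙ (layer n)ᵈ` is open, avoids every distance `Rₙ = c s n / 2`, and
`|A ∩ B_{Rₙ}| ≥ c^{-(n+1)d} |B_{Rₙ}|`, a ratio that does not depend on the `K i`. Choosing the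
`K i` so large that `f (Rₙ) ≤ c^{-(n+1)d}` finishes the proof.
-/

open MeasureTheory Filter

namespace SlowDecay

open Set

def band (p s : ℝ) : Set ℝ := ⋃ z : ℤ, Ioo (z * p) (z * p + s)

lemma add_nat_mul_mem_band {p s x : ℝ} (hx : x ∈ band p s) (N : ℕ) : x + N * p ∈ band p s := by
  obtain ⟨z, hz₁, hz₂⟩ := mem_iUnion.1 hx
  refine mem_iUnion.2 ⟨z + N, ?_, ?_⟩ <;> push_cast <;> linarith

lemma Ioo_zero_subset_band (p : ℝ) {s t : ℝ} (hst : s ≤ t) : Ioo 0 s ⊆ band p t :=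
  fun _ hx => mem_iUnion.2 ⟨0, by simpa using ⟨hx.1, hx.2.trans_le hst⟩⟩

lemma abs_sub_lt_or_lt_abs_sub_of_mem_band {p s x y : ℝ} (hp : 0 ≤ p) (hx : x ∈ band p s)
    (hy : y ∈ band p s) : |x - y| < s ∨ p - s < |x - y| := by
  wlog hxy : y ≤ x generalizing x y
  · simpa only [abs_sub_comm] using this hy hx (le_of_not_ge hxy)
  obtain ⟨z, hx₁, hx₂⟩ := mem_iUnion.1 hx
  obtain ⟨w, hy₁, hy₂⟩ := mem_iUnion.1 hy
  rw [abs_of_nonneg (sub_nonneg.2 hxy)]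
  rcases le_or_gt z w with hzw | hwz
  · left
    have : (z : ℝ) * p ≤ w * p := by gcongr
    linarith
  · right
    have : (w : ℝ) * p + p ≤ z * p := by
      have : (w : ℝ) + 1 ≤ z := by exact_mod_cast hwz
      nlinarith
    linarith

section Euclidean

variable {ι : Type*}

variable (ι) in
def euclideanPi (S : Set ℝ) : Set (EuclideanSpace ℝ ι) := {x | ∀ j, x j ∈ S}

lemma euclideanPi_eq_preimage (S : Set ℝ) :
    euclideanPi ι S = (MeasurableEquiv.toLp 2 (ι → ℝ)).symm ⁻¹' univ.pi fun _ => S := by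
  ext x
  simp [euclideanPi]

variable [Fintype ι]

lemma IsOpen.euclideanPi {S : Set ℝ} (hS : IsOpen S) : IsOpen (euclideanPi ι S) := by
  rw [euclideanPi_eq_preimage]
  exact (isOpen_set_pi finite_univ fun _ _ => hS).preimage (PiLp.continuous_ofLp 2 _)

lemma volume_euclideanPi (S : Set ℝ) :
    volume (euclideanPi ι S) = volume S ^ Fintype.card ι := by
  rw [euclideanPi_eq_preimage,
    (EuclideanSpace.volume_preserving_symm_measurableEquiv_toLp ι).measure_preimage_equiv,
    volume_pi_pi, Finset.prod_const, Finset.card_univ]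

lemma norm_le_sqrt_card_mul {v : EuclideanSpace ℝ ι} {s : ℝ} (hs : 0 ≤ s) (hv : ∀ j, |v j| ≤ s) :
    ‖v‖ ≤ √(Fintype.card ι) * s := by
  rw [EuclideanSpace.norm_eq, ← Real.sqrt_sq hs, ← Real.sqrt_mul (Nat.cast_nonneg _)]
  gcongr
  calc ∑ j, ‖v j‖ ^ 2 ≤ ∑ _j : ι, s ^ 2 := by
        gcongr with j
        rw [Real.norm_eq_abs]
        exact hv j
    _ = Fintype.card ι * s ^ 2 := by simp

lemma ball_subset_euclideanPi (r : ℝ) :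
    Metric.ball (0 : EuclideanSpace ℝ ι) r ⊆ euclideanPi ι (Ioo (-r) r) := fun x hx j =>
  abs_lt.1 <| (PiLp.norm_apply_le x j).trans_lt (mem_ball_zero_iff.1 hx)

lemma volume_ball_le (r : ℝ) :
    volume (Metric.ball (0 : EuclideanSpace ℝ ι) r) ≤ ENNReal.ofReal (2 * r) ^ Fintype.card ι :=
  calc volume (Metric.ball (0 : EuclideanSpace ℝ ι) r)
      ≤ volume (euclideanPi ι (Ioo (-r) r)) := measure_mono (ball_subset_euclideanPi r)
    _ = ENNReal.ofReal (2 * r) ^ Fintype.card ι := by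
        rw [volume_euclideanPi, Real.volume_Ioo, sub_neg_eq_add, two_mul]

lemma euclideanPi_Ioo_subset_ball {s r : ℝ} (hs : 0 ≤ s) (hsr : √(Fintype.card ι) * s < r) :
    euclideanPi ι (Ioo 0 s) ⊆ Metric.ball 0 r := fun x hx =>
  mem_ball_zero_iff.2 <| (norm_le_sqrt_card_mul hs fun j =>
    abs_le.2 ⟨by linarith [(hx j).1], (hx j).2.le⟩).trans_lt hsr

lemma norm_sub_ne_of_mem_euclideanPi_band {p s r : ℝ} {x y : EuclideanSpace ℝ ι}
    (hp : 0 ≤ p) (hs : 0 ≤ s) (hsr : √(Fintype.card ι) * s < r) (hrp : r ≤ p - s)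
    (hx : x ∈ euclideanPi ι (band p s)) (hy : y ∈ euclideanPi ι (band p s)) : ‖x - y‖ ≠ r := by
  by_cases hclose : ∀ j, |x j - y j| < s
  · refine ne_of_lt ((norm_le_sqrt_card_mul hs fun j => ?_).trans_lt hsr)
    simpa using (hclose j).le
  · obtain ⟨j, hj⟩ := not_forall.1 hclose
    have hfar := (abs_sub_lt_or_lt_abs_sub_of_mem_band hp (hx j) (hy j)).resolve_left hj
    refine ne_of_gt (calc r ≤ p - s := hrp
      _ < |x j - y j| := hfar
      _ ≤ ‖x - y‖ := by simpa using PiLp.norm_apply_le (x - y) j)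

end Euclidean

section Layers

variable (c : ℕ) (K : ℕ → ℕ) (s₀ : ℝ)

def scale : ℕ → ℝ
  | 0 => s₀
  | n + 1 => K n * (c * scale n)

def layer : ℕ → Set ℝ
  | 0 => Ioo 0 s₀
  | n + 1 => ⋃ k ∈ Finset.range (K n), (· + k * (c * scale c K s₀ n)) '' layer n

noncomputable def radius (n : ℕ) : ℝ := c * scale c K s₀ n / 2

def avoidingSet (ι : Type*) : Set (EuclideanSpace ℝ ι) := ⋃ n, euclideanPi ι (layer c K s₀ n)

variable {c K s₀}

lemma scale_nonneg (hs₀ : 0 ≤ s₀) (n : ℕ) : 0 ≤ scale c K s₀ n := by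
  induction n with
  | zero => exact hs₀
  | succ n ih => simp only [scale]; positivity

lemma scale_pos (hc : 1 ≤ c) (hK : ∀ n, 1 ≤ K n) (hs₀ : 0 < s₀) (n : ℕ) : 0 < scale c K s₀ n := by
  induction n with
  | zero => exact hs₀
  | succ n ih =>
    have : (0 : ℝ) < K n := by exact_mod_cast hK n
    have : (0 : ℝ) < c := by exact_mod_cast hc
    simp only [scale]; positivity

lemma monotone_scale (hc : 1 ≤ c) (hK : ∀ n, 1 ≤ K n) (hs₀ : 0 ≤ s₀) : Monotone (scale c K s₀) := by
  refine monotone_nat_of_le_succ fun n => ?_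
  have hn := scale_nonneg (c := c) (K := K) hs₀ n
  have hcK : (1 : ℝ) ≤ K n * c := by exact_mod_cast le_mul_of_one_le_of_le (hK n) hc
  simp only [scale]
  nlinarith

lemma two_mul_scale_le_succ (hc : 2 ≤ c) (hK : ∀ n, 1 ≤ K n) (hs₀ : 0 ≤ s₀) (n : ℕ) :
    2 * scale c K s₀ n ≤ scale c K s₀ (n + 1) := by
  have hn := scale_nonneg (c := c) (K := K) hs₀ n
  have hcK : (2 : ℝ) ≤ K n * c := by exact_mod_cast le_mul_of_one_le_of_le (hK n) hc
  simp only [scale]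
  nlinarith

lemma exists_period_eq_nat_mul {i m : ℕ} (him : i ≤ m) :
    ∃ N : ℕ, c * scale c K s₀ m = N * (c * scale c K s₀ i) := by
  induction m, him using Nat.le_induction with
  | base => exact ⟨1, by simp⟩
  | succ m _ ih =>
    obtain ⟨N, hN⟩ := ih
    exact ⟨c * K m * N, by simp only [scale]; rw [hN]; push_cast; ring⟩

lemma isOpen_layer (n : ℕ) : IsOpen (layer c K s₀ n) := by
  induction n with
  | zero => exact isOpen_Ioo
  | succ n ih => exact isOpen_biUnion fun k _ => (isOpenMap_add_right _) _ ih

lemma layer_subset_Ioo (hc : 1 ≤ c) (hs₀ : 0 ≤ s₀) (n : ℕ) :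
    layer c K s₀ n ⊆ Ioo 0 (scale c K s₀ n) := by
  induction n with
  | zero => exact subset_rfl
  | succ n ih =>
    simp only [layer, iUnion_subset_iff, image_subset_iff]
    intro k hk y hy
    have ⟨hy₀, hy₁⟩ := ih hy
    have hc' : (1 : ℝ) ≤ c := by exact_mod_cast hc
    have hk' : (k : ℝ) + 1 ≤ K n := by exact_mod_cast Finset.mem_range.1 hk
    have hn := scale_nonneg (c := c) (K := K) hs₀ n
    have hcn : scale c K s₀ n ≤ c * scale c K s₀ n := le_mul_of_one_le_left hn hc'
    have hkn : (k + 1) * (c * scale c K s₀ n) ≤ K n * (c * scale c K s₀ n) := by gcongr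
    constructor
    · positivity
    · simp only [scale]; linarith

lemma layer_subset_band (hc : 1 ≤ c) (hK : ∀ n, 1 ≤ K n) (hs₀ : 0 ≤ s₀) (m i : ℕ) :
    layer c K s₀ m ⊆ band (c * scale c K s₀ i) (scale c K s₀ i) := by
  induction m with
  | zero => exact Ioo_zero_subset_band _ (monotone_scale hc hK hs₀ (Nat.zero_le i))
  | succ m ih =>
    rcases le_or_gt i m with him | hmi
    · obtain ⟨N, hN⟩ := exists_period_eq_nat_mul (c := c) (K := K) (s₀ := s₀) him
      simp only [layer, iUnion_subset_iff, image_subset_iff]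
      intro k _ y hy
      simpa [hN, ← mul_assoc] using add_nat_mul_mem_band (ih hy) (k * N)
    · exact (layer_subset_Ioo hc hs₀ _).trans
        (Ioo_zero_subset_band _ (monotone_scale hc hK hs₀ hmi))

lemma pairwise_disjoint_layer_translates (hc : 1 ≤ c) (hs₀ : 0 ≤ s₀) (n : ℕ) :
    Pairwise (Function.onFun Disjoint fun k : ℕ =>
      (· + k * (c * scale c K s₀ n)) '' layer c K s₀ n) := by
  refine (pairwise_disjoint_on _).2 fun k l hkl => disjoint_left.2 ?_
  rintro _ ⟨x, hx, rfl⟩ ⟨y, hy, hxy⟩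
  have hs := scale_nonneg (c := c) (K := K) hs₀ n
  have hp : scale c K s₀ n ≤ c * scale c K s₀ n := le_mul_of_one_le_left hs (by exact_mod_cast hc)
  have hkl' : (k : ℝ) + 1 ≤ l := by exact_mod_cast hkl
  have hkp : (k + 1) * (c * scale c K s₀ n) ≤ l * (c * scale c K s₀ n) :=
    mul_le_mul_of_nonneg_right hkl' (hs.trans hp)
  have hx' := layer_subset_Ioo hc hs₀ n hx
  have hy' := layer_subset_Ioo hc hs₀ n hy
  simp only at hxy
  linarith [hx'.1, hx'.2, hy'.1, hy'.2]

lemma volume_layer (hc : 1 ≤ c) (hs₀ : 0 ≤ s₀) (n : ℕ) :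
    volume (layer c K s₀ n) = ENNReal.ofReal (scale c K s₀ n / c ^ n) := by
  induction n with
  | zero => simp [layer, scale, Real.volume_Ioo]
  | succ n ih =>
    have hdisj := (pairwise_disjoint_layer_translates (K := K) hc hs₀ n).set_pairwise
      (Finset.range (K n) : Set ℕ)
    rw [layer, measure_biUnion_finset hdisj fun k _ =>
      (isOpenMap_add_right _ _ (isOpen_layer n)).measurableSet]
    simp only [image_add_right, measure_preimage_add_right, Finset.sum_const, Finset.card_range,
      nsmul_eq_mul, ih]
    have hc₀ : (c : ℝ) ≠ 0 := by positivity
    rw [← ENNReal.ofReal_natCast, ← ENNReal.ofReal_mul (Nat.cast_nonneg _), scale, pow_succ]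
    congr 1
    field_simp

lemma radius_pos (hc : 1 ≤ c) (hK : ∀ n, 1 ≤ K n) (hs₀ : 0 < s₀) (n : ℕ) : 0 < radius c K s₀ n := by
  have : (0 : ℝ) < c := by exact_mod_cast hc
  have := scale_pos hc hK hs₀ n
  unfold radius; positivity

lemma two_mul_radius_le_succ (hc : 2 ≤ c) (hK : ∀ n, 1 ≤ K n) (hs₀ : 0 ≤ s₀) (n : ℕ) :
    2 * radius c K s₀ n ≤ radius c K s₀ (n + 1) := by
  have := two_mul_scale_le_succ hc hK hs₀ n
  unfold radius
  have : (0 : ℝ) ≤ c := Nat.cast_nonneg c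
  nlinarith

lemma strictMono_radius (hc : 2 ≤ c) (hK : ∀ n, 1 ≤ K n) (hs₀ : 0 < s₀) :
    StrictMono (radius c K s₀) :=
  strictMono_nat_of_lt_succ fun n => by
    linarith [two_mul_radius_le_succ hc hK hs₀.le n, radius_pos (one_le_two.trans hc) hK hs₀ n]

lemma tendsto_radius_atTop (hc : 2 ≤ c) (hK : ∀ n, 1 ≤ K n) (hs₀ : 0 < s₀) :
    Tendsto (radius c K s₀) atTop atTop :=
  tendsto_atTop_of_geom_le (radius_pos (one_le_two.trans hc) hK hs₀ 0) one_lt_two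
    (two_mul_radius_le_succ hc hK hs₀.le)

lemma scale_le_radius (hc : 2 ≤ c) (hs₀ : 0 ≤ s₀) (n : ℕ) : scale c K s₀ n ≤ radius c K s₀ n := by
  have : (2 : ℝ) ≤ c := by exact_mod_cast hc
  have := scale_nonneg (c := c) (K := K) hs₀ n
  unfold radius; nlinarith

lemma exists_le_scale (hc : 1 ≤ c) (X : ℕ → ℝ) :
    ∃ (K : ℕ → ℕ) (s₀ : ℝ), (∀ n, 1 ≤ K n) ∧ 0 < s₀ ∧ ∀ n, X n ≤ scale c K s₀ n := by
  set K : ℕ → ℕ := fun n => ⌈X (n + 1)⌉₊ + 1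
  set s₀ := max 1 (X 0)
  have hK : ∀ n, 1 ≤ K n := fun n => Nat.le_add_left 1 _
  have hs₀ : 1 ≤ s₀ := le_max_left _ _
  have hscale : ∀ n, 1 ≤ scale c K s₀ n := fun n =>
    hs₀.trans (monotone_scale hc hK (by positivity) n.zero_le)
  refine ⟨K, s₀, hK, by positivity, fun n => ?_⟩
  cases n with
  | zero => exact le_max_right _ _
  | succ n =>
    have hc' : (1 : ℝ) ≤ c := by exact_mod_cast hc
    have hK' : X (n + 1) ≤ K n := by
      simp only [K]; push_cast; linarith [Nat.le_ceil (X (n + 1))]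
    have : (1 : ℝ) ≤ c * scale c K s₀ n := one_le_mul_of_one_le_of_one_le hc' (hscale n)
    calc X (n + 1) ≤ K n := hK'
      _ ≤ K n * (c * scale c K s₀ n) := le_mul_of_one_le_right (Nat.cast_nonneg _) this

variable {ι : Type*} [Fintype ι]

lemma isOpen_avoidingSet : IsOpen (avoidingSet c K s₀ ι) :=
  isOpen_iUnion fun n => IsOpen.euclideanPi (isOpen_layer n)

lemma norm_sub_ne_radius (hc : 2 ≤ c) (hcι : 2 * √(Fintype.card ι) < c) (hK : ∀ n, 1 ≤ K n)
    (hs₀ : 0 < s₀) {x y : EuclideanSpace ℝ ι} (hx : x ∈ avoidingSet c K s₀ ι)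
    (hy : y ∈ avoidingSet c K s₀ ι) (n : ℕ) : ‖x - y‖ ≠ radius c K s₀ n := by
  obtain ⟨a, hxa⟩ := mem_iUnion.1 hx
  obtain ⟨b, hyb⟩ := mem_iUnion.1 hy
  have hc₁ : 1 ≤ c := one_le_two.trans hc
  have hs := scale_pos hc₁ hK hs₀ n
  have hc' : (2 : ℝ) ≤ c := by exact_mod_cast hc
  refine norm_sub_ne_of_mem_euclideanPi_band (p := c * scale c K s₀ n) (by positivity) hs.le
    ?_ ?_ (fun j => layer_subset_band hc₁ hK hs₀.le a n (hxa j))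
    (fun j => layer_subset_band hc₁ hK hs₀.le b n (hyb j))
  · unfold radius; nlinarith
  · unfold radius; nlinarith

lemma euclideanPi_layer_subset_ball (hc : 1 ≤ c) (hcι : 2 * √(Fintype.card ι) < c)
    (hK : ∀ n, 1 ≤ K n) (hs₀ : 0 < s₀) (n : ℕ) :
    euclideanPi ι (layer c K s₀ n) ⊆ Metric.ball 0 (radius c K s₀ n) := by
  have hs := scale_pos hc hK hs₀ n
  refine fun x hx =>
    euclideanPi_Ioo_subset_ball hs.le ?_ fun j => layer_subset_Ioo hc hs₀.le n (hx j)
  unfold radius; nlinarith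

lemma ofReal_mul_volume_ball_radius_le (hc : 1 ≤ c) (hs₀ : 0 ≤ s₀) (n : ℕ) :
    ENNReal.ofReal (((c : ℝ) ^ (n + 1))⁻¹ ^ Fintype.card ι) *
        volume (Metric.ball (0 : EuclideanSpace ℝ ι) (radius c K s₀ n)) ≤
      volume (euclideanPi ι (layer c K s₀ n)) := by
  have hc₀ : (c : ℝ) ≠ 0 := by positivity
  have hs := scale_nonneg (c := c) (K := K) hs₀ n
  have h2r : 2 * radius c K s₀ n = c * scale c K s₀ n := by unfold radius; ring
  calc _ ≤ ENNReal.ofReal (((c : ℝ) ^ (n + 1))⁻¹ ^ Fintype.card ι) *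
        ENNReal.ofReal (c * scale c K s₀ n) ^ Fintype.card ι := by
        gcongr
        exact h2r ▸ volume_ball_le _
    _ = volume (euclideanPi ι (layer c K s₀ n)) := by
        rw [volume_euclideanPi, volume_layer hc hs₀, ← ENNReal.ofReal_pow (by positivity),
          ← ENNReal.ofReal_mul (by positivity), ← ENNReal.ofReal_pow (by positivity), ← mul_pow]
        congr 2
        field_simp
        ring

end Layers

end SlowDecay

open SlowDecay in
theorem slow_decay_avoiding_euclidean_distances_general (d : ℕ)
    (f : ℝ → ℝ)
    (hf_lim : Tendsto f atTop (nhds 0)) :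
    ∃ (A : Set (EuclideanSpace ℝ (Fin d))) (R : ℕ → ℝ),
      IsOpen A ∧
      StrictMono R ∧
      (∀ n, 0 < R n) ∧
      Tendsto R atTop atTop ∧
      (∀ n, ∀ x ∈ A, ∀ y ∈ A, ‖x - y‖ ≠ R n) ∧
      (∀ n, ENNReal.ofReal (f (R n)) * volume (Metric.ball (0 : EuclideanSpace ℝ (Fin d)) (R n)) ≤
        volume (A ∩ Metric.ball (0 : EuclideanSpace ℝ (Fin d)) (R n))) := by
  set c := 2 * (d + 1)
  have hc : 2 ≤ c := by omega
  have hc₁ : 1 ≤ c := by omega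
  have hcd : 2 * √(Fintype.card (Fin d)) < c := by
    have : √(d : ℝ) < d + 1 := (Real.sqrt_lt' (by positivity)).2 (by nlinarith)
    simp only [c, Fintype.card_fin]; push_cast; linarith
  choose X hX using fun n : ℕ => eventually_atTop.1 <|
    hf_lim.eventually (ge_mem_nhds (by positivity : (0 : ℝ) < ((c : ℝ) ^ (n + 1))⁻¹ ^ d))
  obtain ⟨K, s₀, hK, hs₀, hXs⟩ := exists_le_scale hc₁ X
  refine ⟨avoidingSet c K s₀ (Fin d), radius c K s₀, isOpen_avoidingSet,
    strictMono_radius hc hK hs₀, radius_pos hc₁ hK hs₀,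
    tendsto_radius_atTop hc hK hs₀, fun n x hx y hy => norm_sub_ne_radius hc hcd hK hs₀ hx hy n,
    fun n => ?_⟩
  have hfR : f (radius c K s₀ n) ≤ ((c : ℝ) ^ (n + 1))⁻¹ ^ d :=
    hX n _ ((hXs n).trans (scale_le_radius hc hs₀.le n))
  calc _ ≤ ENNReal.ofReal (((c : ℝ) ^ (n + 1))⁻¹ ^ Fintype.card (Fin d)) *
        volume (Metric.ball (0 : EuclideanSpace ℝ (Fin d)) (radius c K s₀ n)) := by
        rw [Fintype.card_fin]; gcongr
    _ ≤ volume (euclideanPi (Fin d) (layer c K s₀ n)) :=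
        ofReal_mul_volume_ball_radius_le hc₁ hs₀.le n
    _ ≤ _ := measure_mono (Set.subset_inter
        (Set.subset_iUnion (fun m => euclideanPi (Fin d) (layer c K s₀ m)) n)
        (euclideanPi_layer_subset_ball hc₁ hcd hK hs₀ n))

/-- For every dimension `d ≥ 1` and every function `f : (0,∞) → [0,1]`
with `f(R) → 0` as `R → ∞`, there exist an open set `A ⊆ ℝ^d` and a strictly increasing
sequence of positive reals `R n → ∞` such that `‖x - y‖ ≠ R n` for all `x, y ∈ A` and
all `n` (Euclidean norm), and `μ(A ∩ B_{R n}) ≥ f (R n) · μ(B_{R n})` for all `n`. -/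
theorem slow_decay_avoiding_euclidean_distances (d : ℕ) (hd : 1 ≤ d)
    (f : ℝ → ℝ)
    (hf_range : ∀ R : ℝ, 0 < R → 0 ≤ f R ∧ f R ≤ 1)
    (hf_lim : Tendsto f atTop (nhds 0)) :
    ∃ (A : Set (EuclideanSpace ℝ (Fin d))) (R : ℕ → ℝ),
      IsOpen A ∧
      StrictMono R ∧
      (∀ n, 0 < R n) ∧
      Tendsto R atTop atTop ∧
      (∀ n, ∀ x ∈ A, ∀ y ∈ A, ‖x - y‖ ≠ R n) ∧
      (∀ n, ENNReal.ofReal (f (R n)) * volume (Metric.ball (0 : EuclideanSpace ℝ (Fin d)) (R n)) ≤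
        volume (A ∩ Metric.ball (0 : EuclideanSpace ℝ (Fin d)) (R n))) :=
  slow_decay_avoiding_euclidean_distances_general d f hf_lim
end

section
/- Let d ∈ ℕ (d ≥ 1) and let A = ⋃_{z ∈ ℤ^d} {y ∈ ℝ^d : ‖y − z‖_∞ < 1/8} be the integer lattice thickened by 1/8 in the ℓ^∞ norm. Then A has positive upper density with respect to Lebesgue measure (limsup_{R→∞} μ(A ∩ B_R)/μ(B_R) > 0, where B_R is the Euclidean ball of radius R about the origin), yet for all x, y ∈ A and all integers k, ‖x − y‖_∞ ≠ k + 1/2; that is, A misses every half-integer ℓ^∞ distance. -/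
/-!
`A` is the set of points all of whose coordinates lie within `1/8` of an integer. For
`x, y ∈ A` every `|x i - y i|` is then within `1/4` of an integer, and so is their maximum,
which therefore is never a half-integer. For the density, `A` is a product of one-dimensional
sets, so its part in a box `(-(N + 1/8), N + 1/8)^d` has volume `((2N + 1) / 4)^d`; that box lies
in `B_R` when `N = ⌊R / (2(√d + 1))⌋`, while `B_R` has volume at most `(2R)^d`.
-/

open MeasureTheory Metric Set
open scoped ENNReal

lemma Real.iSup_lt_iff_of_finite {ι : Type*} [Finite ι] {f : ι → ℝ} {r : ℝ} (hr : 0 < r) :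
    (⨆ i, f i) < r ↔ ∀ i, f i < r := by
  cases isEmpty_or_nonempty ι
  · simp [hr]
  · obtain ⟨j, hj⟩ := exists_eq_ciSup_of_finite (f := f)
    exact ⟨fun h i => (le_ciSup (Set.finite_range f).bddAbove i).trans_lt h,
      fun h => hj ▸ h j⟩

lemma Real.iSup_mem_of_finite {ι : Type*} [Finite ι] {f : ι → ℝ} {S : Set ℝ} (h0 : 0 ∈ S)
    (hf : ∀ i, f i ∈ S) : (⨆ i, f i) ∈ S := by
  cases isEmpty_or_nonempty ι
  · simpa using h0
  · obtain ⟨j, hj⟩ := exists_eq_ciSup_of_finite (f := f)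
    exact hj ▸ hf j

lemma intCast_add_half_notMem_thickening_half (k : ℤ) :
    (k : ℝ) + 1 / 2 ∉ thickening (1 / 2) (range ((↑) : ℤ → ℝ)) := by
  rw [mem_thickening_iff]
  rintro ⟨_, ⟨m, rfl⟩, hm⟩
  rw [Real.dist_eq, abs_lt] at hm
  have h1 : ((k - m : ℤ) : ℝ) < 0 := by push_cast; linarith
  have h2 : (-1 : ℝ) < ((k - m : ℤ) : ℝ) := by push_cast; linarith
  norm_cast at h1 h2
  omega

lemma abs_sub_mem_thickening_range_intCast {s t r r' : ℝ}
    (hs : s ∈ thickening r (range ((↑) : ℤ → ℝ))) (ht : t ∈ thickening r' (range ((↑) : ℤ → ℝ))) :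
    |s - t| ∈ thickening (r + r') (range ((↑) : ℤ → ℝ)) := by
  rw [mem_thickening_iff] at hs ht ⊢
  obtain ⟨_, ⟨m, rfl⟩, hm⟩ := hs
  obtain ⟨_, ⟨n, rfl⟩, hn⟩ := ht
  refine ⟨_, mem_range_self |m - n|, ?_⟩
  rw [Real.dist_eq] at hm hn ⊢
  push_cast
  calc |(|s - t| - |(m : ℝ) - n|)| ≤ |(s - t) - (m - n)| := abs_abs_sub_abs_le_abs_sub _ _
    _ = |(s - m) - (t - n)| := by ring_nf
    _ ≤ |s - m| + |t - n| := abs_sub _ _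
    _ < r + r' := add_lt_add hm hn

lemma ofReal_le_volume_thickening_range_intCast_inter_Ioo {r : ℝ} (hr : r ≤ 1 / 2) (N : ℕ) :
    ENNReal.ofReal ((2 * N + 1) * (2 * r)) ≤
      volume (thickening r (range ((↑) : ℤ → ℝ)) ∩ Ioo (-(N + r)) (N + r)) := by
  set S := Finset.Icc (-(N : ℤ)) N
  have hdisj : (S : Set ℤ).PairwiseDisjoint fun m => ball (m : ℝ) r := by
    intro m _ n _ hmn
    apply ball_disjoint_ball
    have : (1 : ℝ) ≤ |(m : ℝ) - n| := by exact_mod_cast Int.one_le_abs (sub_ne_zero.2 hmn)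
    rw [Real.dist_eq]
    linarith
  have hsub : ∀ m ∈ S, ball (m : ℝ) r ⊆ Ioo (-(N + r)) (N + r) := by
    intro m hm
    obtain ⟨h1, h2⟩ := Finset.mem_Icc.1 hm
    have h1' : -(N : ℝ) ≤ m := by exact_mod_cast h1
    have h2' : (m : ℝ) ≤ N := by exact_mod_cast h2
    rw [Real.ball_eq_Ioo]
    exact Ioo_subset_Ioo (by linarith) (by linarith)
  calc ENNReal.ofReal ((2 * N + 1) * (2 * r))
      = ∑ m ∈ S, volume (ball (m : ℝ) r) := by
        have hcard : S.card = 2 * N + 1 := by simp only [S, Int.card_Icc]; omega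
        rw [Finset.sum_congr rfl fun (m : ℤ) _ => Real.volume_ball (m : ℝ) r, Finset.sum_const,
          hcard, nsmul_eq_mul, ENNReal.ofReal_mul (by positivity)]
        norm_cast
    _ = volume (⋃ m ∈ S, ball (m : ℝ) r) :=
        (measure_biUnion_finset hdisj fun _ _ => measurableSet_ball).symm
    _ ≤ _ := measure_mono <| iUnion₂_subset fun m hm =>
        subset_inter (ball_subset_thickening (mem_range_self m) r) (hsub m hm)

def thickenedLattice (ι : Type*) (r : ℝ) : Set (EuclideanSpace ℝ ι) :=
  {y | ∀ i, y i ∈ thickening r (range ((↑) : ℤ → ℝ))}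

lemma iUnion_setOf_iSup_abs_sub_lt_eq_thickenedLattice {ι : Type*} [Fintype ι] {r : ℝ}
    (hr : 0 < r) :
    (⋃ z ∈ {z : EuclideanSpace ℝ ι | ∀ i, ∃ m : ℤ, z i = m},
      {y : EuclideanSpace ℝ ι | (⨆ i, |y i - z i|) < r}) = thickenedLattice ι r := by
  ext y
  simp only [mem_iUnion, mem_ofPred_eq, Real.iSup_lt_iff_of_finite hr, exists_prop,
    thickenedLattice, mem_thickening_iff, exists_range_iff, Real.dist_eq]
  constructor
  · rintro ⟨z, hz, hyz⟩ i
    obtain ⟨m, hm⟩ := hz i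
    exact ⟨m, hm ▸ hyz i⟩
  · intro h
    choose m hm using h
    exact ⟨WithLp.toLp 2 fun i => (m i : ℝ), fun i => ⟨m i, rfl⟩, hm⟩

namespace EuclideanSpace

variable {ι : Type*} [Fintype ι]

lemma volume_ofLp_preimage_pi (s : ι → Set ℝ) :
    volume ((WithLp.ofLp : EuclideanSpace ℝ ι → ι → ℝ) ⁻¹' univ.pi s) = ∏ i, volume (s i) := by
  rw [← volume_pi_pi]
  exact (volume_preserving_symm_measurableEquiv_toLp ι).measure_preimage_equiv _

lemma ball_zero_subset_ofLp_preimage_pi (R : ℝ) :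
    ball (0 : EuclideanSpace ℝ ι) R ⊆ WithLp.ofLp ⁻¹' univ.pi fun _ => Ioo (-R) R := by
  intro y hy i _
  rw [mem_ball_zero_iff] at hy
  exact abs_lt.1 ((PiLp.norm_apply_le y i).trans_lt hy)

lemma volume_ball_zero_le (R : ℝ) :
    volume (ball (0 : EuclideanSpace ℝ ι) R) ≤ ENNReal.ofReal (2 * R) ^ Fintype.card ι := by
  refine (measure_mono (ball_zero_subset_ofLp_preimage_pi R)).trans_eq ?_
  rw [volume_ofLp_preimage_pi, Real.volume_Ioo, Finset.prod_const, Finset.card_univ]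
  ring_nf

lemma norm_le_sqrt_card_mul {y : EuclideanSpace ℝ ι} {a : ℝ} (ha : 0 ≤ a)
    (h : ∀ i, |y i| ≤ a) : ‖y‖ ≤ √(Fintype.card ι) * a := by
  rw [EuclideanSpace.norm_eq, ← Real.sqrt_sq ha, ← Real.sqrt_mul (Nat.cast_nonneg _)]
  refine Real.sqrt_le_sqrt ?_
  calc ∑ i, ‖y i‖ ^ 2 ≤ ∑ _i : ι, a ^ 2 :=
        Finset.sum_le_sum fun i _ => pow_le_pow_left₀ (norm_nonneg _) (h i) 2
    _ = Fintype.card ι * a ^ 2 := by simp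

end EuclideanSpace

namespace thickenedLattice

variable {ι : Type*} [Fintype ι] {r : ℝ}

lemma ofLp_preimage_pi_subset_inter_ball (hr : 0 ≤ r) {N : ℕ} {R : ℝ}
    (hNR : √(Fintype.card ι) * (N + r) < R) :
    WithLp.ofLp ⁻¹' (univ.pi fun _ => thickening r (range ((↑) : ℤ → ℝ)) ∩ Ioo (-(N + r)) (N + r))
      ⊆ thickenedLattice ι r ∩ ball (0 : EuclideanSpace ℝ ι) R := by
  intro y hy
  simp only [mem_preimage, mem_univ_pi] at hy
  refine ⟨fun i => (hy i).1, mem_ball_zero_iff.2 ?_⟩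
  refine (EuclideanSpace.norm_le_sqrt_card_mul (by positivity) fun i => ?_).trans_lt hNR
  exact abs_le.2 ⟨(hy i).2.1.le, (hy i).2.2.le⟩

lemma le_volume_inter_ball (hr₀ : 0 ≤ r) (hr : r ≤ 1 / 2) {R : ℝ}
    (hR : √(Fintype.card ι) + 1 ≤ R) :
    ENNReal.ofReal (r / (2 * (√(Fintype.card ι) + 1))) ^ Fintype.card ι *
        volume (ball (0 : EuclideanSpace ℝ ι) R) ≤
      volume (thickenedLattice ι r ∩ ball (0 : EuclideanSpace ℝ ι) R) := by
  set s := √(Fintype.card ι) + 1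
  set N := ⌊R / (2 * s)⌋₊
  have hs : 0 < s := by positivity
  have hN : (N : ℝ) * (2 * s) ≤ R :=
    (le_div_iff₀ (by positivity)).1 (Nat.floor_le (div_nonneg (by linarith) (by positivity)))
  have hN' : R < (N + 1) * (2 * s) := (div_lt_iff₀ (by positivity)).1 (Nat.lt_floor_add_one _)
  have hNR : √(Fintype.card ι) * (N + r) < R := by
    have hc : 0 ≤ √(Fintype.card ι) := Real.sqrt_nonneg _
    nlinarith [Nat.cast_nonneg (α := ℝ) N]
  have hRN : 2 * R * (r / (2 * s)) ≤ (2 * N + 1) * (2 * r) := by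
    rw [mul_div_assoc', div_le_iff₀ (by positivity)]
    nlinarith [mul_le_mul_of_nonneg_left hN'.le hr₀,
      mul_nonneg (mul_nonneg hr₀ hs.le) (Nat.cast_nonneg (α := ℝ) N)]
  calc ENNReal.ofReal (r / (2 * s)) ^ Fintype.card ι * volume (ball (0 : EuclideanSpace ℝ ι) R)
      ≤ ENNReal.ofReal (r / (2 * s)) ^ Fintype.card ι *
          ENNReal.ofReal (2 * R) ^ Fintype.card ι := by
        gcongr; exact EuclideanSpace.volume_ball_zero_le R
    _ = ENNReal.ofReal (2 * R * (r / (2 * s))) ^ Fintype.card ι := by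
        rw [ENNReal.ofReal_mul (p := 2 * R) (by linarith), mul_pow, mul_comm]
    _ ≤ ∏ _i : ι, volume (thickening r (range ((↑) : ℤ → ℝ)) ∩ Ioo (-(N + r)) (N + r)) := by
        rw [Finset.prod_const, Finset.card_univ]
        gcongr
        exact (ENNReal.ofReal_le_ofReal hRN).trans
          (ofReal_le_volume_thickening_range_intCast_inter_Ioo hr N)
    _ = _ := (EuclideanSpace.volume_ofLp_preimage_pi _).symm
    _ ≤ _ := measure_mono (ofLp_preimage_pi_subset_inter_ball hr₀ hNR)

lemma limsup_volume_inter_ball_div_pos (hr₀ : 0 < r) (hr : r ≤ 1 / 2) :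
    0 < Filter.limsup (fun R : ℝ => volume (thickenedLattice ι r ∩ ball 0 R) /
      volume (ball (0 : EuclideanSpace ℝ ι) R)) Filter.atTop := by
  have hc : 0 < r / (2 * (√(Fintype.card ι) + 1)) := by positivity
  refine (ENNReal.pow_pos (ENNReal.ofReal_pos.2 hc) (Fintype.card ι)).trans_le
    (Filter.le_limsup_of_frequently_le' (Filter.Eventually.frequently ?_))
  filter_upwards [Filter.eventually_ge_atTop (√(Fintype.card ι) + 1)] with R hR
  have hR₀ : 0 < R := lt_of_lt_of_le (by positivity) hR
  rw [ENNReal.le_div_iff_mul_le (Or.inl (measure_ball_pos volume 0 hR₀).ne')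
    (Or.inl measure_ball_lt_top.ne)]
  exact le_volume_inter_ball hr₀.le hr hR

lemma iSup_abs_sub_ne_int_add_half (hr : r ≤ 1 / 4) {x y : EuclideanSpace ℝ ι}
    (hx : x ∈ thickenedLattice ι r) (hy : y ∈ thickenedLattice ι r) (k : ℤ) :
    (⨆ i, |x i - y i|) ≠ k + 1 / 2 := by
  have hmem : (⨆ i, |x i - y i|) ∈ thickening (1 / 2) (range ((↑) : ℤ → ℝ)) :=
    Real.iSup_mem_of_finite (self_subset_thickening (by norm_num) _ ⟨0, Int.cast_zero⟩)
      fun i => thickening_mono (by linarith) _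
        (abs_sub_mem_thickening_range_intCast (hx i) (hy i))
  exact fun h => intCast_add_half_notMem_thickening_half k (h ▸ hmem)

end thickenedLattice

theorem thickened_lattice_linfty_general (d : ℕ)
    (A : Set (EuclideanSpace ℝ (Fin d)))
    (hA : A = ⋃ z ∈ {z : EuclideanSpace ℝ (Fin d) | ∀ i, ∃ m : ℤ, z i = m},
      {y : EuclideanSpace ℝ (Fin d) | (⨆ i, |y i - z i|) < 1/8}) :
    0 < Filter.limsup
        (fun R : ℝ => volume (A ∩ Metric.ball (0 : EuclideanSpace ℝ (Fin d)) R) /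
          volume (Metric.ball (0 : EuclideanSpace ℝ (Fin d)) R)) Filter.atTop ∧
    ∀ x ∈ A, ∀ y ∈ A, ∀ k : ℤ, (⨆ i, |x i - y i|) ≠ (k : ℝ) + 1/2 := by
  rw [hA, iUnion_setOf_iSup_abs_sub_lt_eq_thickenedLattice (by norm_num)]
  exact ⟨thickenedLattice.limsup_volume_inter_ball_div_pos (by norm_num) (by norm_num),
    fun x hx y hy => thickenedLattice.iSup_abs_sub_ne_int_add_half (by norm_num) hx hy⟩

/-- Let `d ≥ 1` and let `A` be the integer lattice in `ℝ^d` thickened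
by `1/8` in the `ℓ^∞` norm (expressed via `⨆ i, |y i - z i|`). Then `A` has positive
upper density with respect to Lebesgue measure (with Euclidean balls `B_R`), yet
`‖x − y‖_∞ ≠ k + 1/2` for all `x, y ∈ A` and all integers `k`. -/
theorem thickened_lattice_linfty (d : ℕ) (hd : 1 ≤ d)
    (A : Set (EuclideanSpace ℝ (Fin d)))
    (hA : A = ⋃ z ∈ {z : EuclideanSpace ℝ (Fin d) | ∀ i, ∃ m : ℤ, z i = m},
      {y : EuclideanSpace ℝ (Fin d) | (⨆ i, |y i - z i|) < 1/8}) :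
    0 < Filter.limsup
        (fun R : ℝ => volume (A ∩ Metric.ball (0 : EuclideanSpace ℝ (Fin d)) R) /
          volume (Metric.ball (0 : EuclideanSpace ℝ (Fin d)) R)) Filter.atTop ∧
    ∀ x ∈ A, ∀ y ∈ A, ∀ k : ℤ, (⨆ i, |x i - y i|) ≠ (k : ℝ) + 1/2 :=
  thickened_lattice_linfty_general d A hA
end

section
/- Let d ∈ ℕ (d ≥ 1) and let A = ⋃_{z ∈ ℤ^d} {y ∈ ℝ^d : ‖y − z‖_1 < 1/8} be the integer lattice thickened by 1/8 in the ℓ^1 norm. Then A has positive upper density with respect to Lebesgue measure (limsup_{R→∞} μ(A ∩ B_R)/μ(B_R) > 0, where B_R is the Euclidean ball of radius R about the origin), yet for all x, y ∈ A and all integers k, ‖x − y‖_1 ≠ k + 1/2; that is, A misses every half-integer ℓ^1 distance. -/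
/-!
If `x` and `y` lie within `ℓ¹`-distance `1/8` of lattice points `z` and `w`, then by the triangle
inequality `‖x - y‖₁` lies within `1/4` of the integer `‖z - w‖₁`, so it is never a half-integer.
For the density, the thickening contains the product of `d` unions of `n` intervals
`[m, m + ε)` with `ε = 1/(8 (d + 1))`; with `n ≈ R / (2 (d + 1))` this box lies in `B_R` and has
volume `(n ε)^d`, a fixed fraction of `μ(B_R) = R^d μ(B_1)`.
-/

open MeasureTheory Filter Set Metric Module
open scoped ENNReal

theorem limsup_measure_inter_ball_div_pos {E : Type*} [NormedAddCommGroup E] [NormedSpace ℝ E]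
    [FiniteDimensional ℝ E] [MeasurableSpace E] [BorelSpace E] (μ : Measure E)
    [μ.IsAddHaarMeasure] {S : Set E} {c : ℝ} (hc : 0 < c)
    (hS : ∀ᶠ R in atTop, ENNReal.ofReal (c * R ^ finrank ℝ E) ≤ μ (S ∩ ball 0 R)) :
    0 < limsup (fun R : ℝ => μ (S ∩ ball 0 R) / μ (ball 0 R)) atTop := by
  set V := μ (ball 0 1)
  have hV0 : V ≠ 0 := (measure_ball_pos μ 0 one_pos).ne'
  have hVtop : V ≠ ∞ := measure_ball_lt_top.ne
  refine (ENNReal.div_pos (ENNReal.ofReal_pos.2 hc).ne' hVtop).trans_le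
    (le_limsup_of_frequently_le' (Eventually.frequently ?_))
  filter_upwards [hS, eventually_gt_atTop 0] with R hSR hR
  rw [Measure.addHaar_ball_of_pos μ 0 hR, ENNReal.le_div_iff_mul_le
    (Or.inl (mul_ne_zero (by simpa using pow_pos hR _) hV0))
    (Or.inl (ENNReal.mul_ne_top ENNReal.ofReal_ne_top hVtop))]
  calc ENNReal.ofReal c / V * (ENNReal.ofReal (R ^ finrank ℝ E) * V)
      = ENNReal.ofReal (c * R ^ finrank ℝ E) := by
        rw [mul_comm (ENNReal.ofReal _) V, ← mul_assoc, ENNReal.div_mul_cancel hV0 hVtop,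
          ENNReal.ofReal_mul hc.le]
    _ ≤ μ (S ∩ ball 0 R) := hSR

theorem ne_intCast_add_half_of_abs_sub_intCast_lt {t : ℝ} {N : ℤ} (h : |t - N| < 1 / 2)
    (k : ℤ) : t ≠ k + 1 / 2 := by
  rintro rfl
  rw [abs_lt] at h
  have h₁ : ((-1 : ℤ) : ℝ) < (k - N : ℤ) := by push_cast; linarith
  have h₂ : ((k - N : ℤ) : ℝ) < (0 : ℤ) := by push_cast; linarith
  have := Int.cast_lt.1 h₁
  have := Int.cast_lt.1 h₂
  omega

theorem abs_abs_sub_sub_abs_sub_le (a b c e : ℝ) : |(|a - b| - |c - e|)| ≤ |a - c| + |b - e| :=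
  calc |(|a - b| - |c - e|)| ≤ |(a - b) - (c - e)| := abs_abs_sub_abs_le_abs_sub _ _
    _ = |(a - c) - (b - e)| := by ring_nf
    _ ≤ |a - c| + |b - e| := abs_sub _ _

theorem abs_sum_abs_sub_sub_sum_abs_sub_le {ι : Type*} [Fintype ι] (x y z w : ι → ℝ) :
    |(∑ i, |x i - y i|) - (∑ i, |z i - w i|)| ≤ ∑ i, |x i - z i| + ∑ i, |y i - w i| := by
  rw [← Finset.sum_sub_distrib, ← Finset.sum_add_distrib]
  exact (Finset.abs_sum_le_sum_abs _ _).trans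
    (Finset.sum_le_sum fun i _ => abs_abs_sub_sub_abs_sub_le _ _ _ _)

theorem EuclideanSpace.norm_le_sum_abs {ι : Type*} [Fintype ι] (y : EuclideanSpace ℝ ι) :
    ‖y‖ ≤ ∑ i, |y i| := by
  have hsum : 0 ≤ ∑ i, |y i| := Finset.sum_nonneg fun i _ => abs_nonneg _
  rw [EuclideanSpace.norm_eq, ← Real.sqrt_sq hsum]
  exact Real.sqrt_le_sqrt (Finset.sum_sq_le_sq_sum_of_nonneg fun i _ => norm_nonneg _)

section LatticeThickening

variable {ι : Type*} [Fintype ι]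

variable (ι) in
def latticeThickening (r : ℝ) : Set (EuclideanSpace ℝ ι) :=
  ⋃ z ∈ {z : EuclideanSpace ℝ ι | ∀ i, ∃ m : ℤ, z i = m}, {y | ∑ i, |y i - z i| < r}

theorem sum_abs_sub_ne_intCast_add_half {r : ℝ} (hr : r ≤ 1 / 4) {x y : EuclideanSpace ℝ ι}
    (hx : x ∈ latticeThickening ι r) (hy : y ∈ latticeThickening ι r) (k : ℤ) :
    ∑ i, |x i - y i| ≠ k + 1 / 2 := by
  simp only [latticeThickening, mem_iUnion₂, mem_ofPred_eq] at hx hy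
  obtain ⟨z, hz, hxz⟩ := hx
  obtain ⟨w, hw, hyw⟩ := hy
  choose m hm using hz
  choose n hn using hw
  have hN : ∑ i, |z i - w i| = ((∑ i, |m i - n i| : ℤ) : ℝ) := by
    push_cast
    simp only [hm, hn]
  refine ne_intCast_add_half_of_abs_sub_intCast_lt (N := ∑ i, |m i - n i|) ?_ k
  rw [← hN]
  linarith [abs_sum_abs_sub_sub_sum_abs_sub_le x.ofLp y.ofLp z.ofLp w.ofLp]

def comb (n : ℕ) (ε : ℝ) : Set ℝ := ⋃ m ∈ Finset.range n, Ico (m : ℝ) (m + ε)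

theorem volume_comb (n : ℕ) {ε : ℝ} (hε : ε ≤ 1) :
    volume (comb n ε) = n * ENNReal.ofReal ε := by
  have hdisj : (Finset.range n : Set ℕ).PairwiseDisjoint fun m : ℕ => Ico (m : ℝ) (m + ε) := by
    intro m₁ _ m₂ _ hne
    have := pairwise_disjoint_Ico_intCast ℝ (Nat.cast_injective.ne hne : (m₁ : ℤ) ≠ m₂)
    simp only [Function.onFun, Int.cast_natCast] at this
    exact this.mono (Ico_subset_Ico_right (by linarith)) (Ico_subset_Ico_right (by linarith))
  rw [comb, measure_biUnion_finset hdisj fun m _ => measurableSet_Ico]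
  simp [Real.volume_Ico]

theorem mem_comb {n : ℕ} {ε t : ℝ} : t ∈ comb n ε ↔ ∃ m < n, (m : ℝ) ≤ t ∧ t < m + ε := by
  simp only [comb, mem_iUnion, Finset.mem_range, mem_Ico, exists_prop]

variable (ι) in
def combBox (n : ℕ) (ε : ℝ) : Set (EuclideanSpace ℝ ι) := {y | ∀ i, y i ∈ comb n ε}

theorem volume_combBox (n : ℕ) {ε : ℝ} (hε₀ : 0 ≤ ε) (hε : ε ≤ 1) :
    volume (combBox ι n ε) = ENNReal.ofReal ((n * ε) ^ Fintype.card ι) := by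
  have : combBox ι n ε = (MeasurableEquiv.toLp 2 (ι → ℝ)).symm ⁻¹' univ.pi fun _ => comb n ε := by
    ext y; simp [combBox]
  rw [this, (EuclideanSpace.volume_preserving_symm_measurableEquiv_toLp ι).measure_preimage_equiv,
    volume_pi_pi, Finset.prod_const, volume_comb n hε, Finset.card_univ,
    ← ENNReal.ofReal_natCast, ← ENNReal.ofReal_mul n.cast_nonneg,
    ← ENNReal.ofReal_pow (by positivity)]

theorem combBox_subset_closedBall (n : ℕ) {ε : ℝ} (hε : ε ≤ 1) :
    combBox ι n ε ⊆ closedBall 0 (Fintype.card ι * n) := by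
  intro y hy
  rw [mem_closedBall_zero_iff]
  refine (EuclideanSpace.norm_le_sum_abs y).trans ?_
  calc ∑ i, |y i| ≤ ∑ _i : ι, (n : ℝ) := Finset.sum_le_sum fun i _ => by
        obtain ⟨m, hm, hmy, hym⟩ : ∃ m : ℕ, m < n ∧ (m : ℝ) ≤ y i ∧ y i < m + ε := by
          exact mem_comb.1 (hy i)
        have : (m : ℝ) + 1 ≤ n := by exact_mod_cast hm
        rw [abs_of_nonneg ((Nat.cast_nonneg m).trans hmy)]
        linarith
    _ = Fintype.card ι * n := by simp

theorem combBox_subset_latticeThickening (n : ℕ) {ε r : ℝ} (hε : Fintype.card ι * ε < r) :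
    combBox ι n ε ⊆ latticeThickening ι r := by
  intro y hy
  choose m _ hmy hym using fun i => mem_comb.1 (hy i)
  simp only [latticeThickening, mem_iUnion₂, mem_ofPred_eq]
  refine ⟨WithLp.toLp 2 fun i => (m i : ℝ), fun i => ⟨m i, by simp⟩, ?_⟩
  calc ∑ i, |y i - m i| ≤ ∑ _i : ι, ε := Finset.sum_le_sum fun i _ => by
        rw [abs_of_nonneg (by linarith [hmy i])]
        linarith [hym i]
    _ < r := by simpa using hε

theorem eventually_le_volume_latticeThickening_inter_ball {r : ℝ} (hr : 0 < r) :
    ∃ c > 0, ∀ᶠ R in atTop,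
      ENNReal.ofReal (c * R ^ Fintype.card ι) ≤ volume (latticeThickening ι r ∩ ball 0 R) := by
  set d : ℝ := (Fintype.card ι : ℝ)
  have hd : 0 ≤ d := Nat.cast_nonneg _
  set ε := min (r / (d + 1)) 1
  have hε₀ : 0 < ε := lt_min (by positivity) one_pos
  have hεr : d * ε < r := calc
    d * ε ≤ d * (r / (d + 1)) := mul_le_mul_of_nonneg_left (min_le_left _ _) hd
    _ < r := by rw [mul_div_assoc', div_lt_iff₀ (by positivity)]; linarith
  refine ⟨(ε / (4 * (d + 1))) ^ Fintype.card ι, pow_pos (div_pos hε₀ (by positivity)) _, ?_⟩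
  filter_upwards [eventually_ge_atTop (4 * (d + 1))] with R hR
  have hR₀ : 0 < R := by linarith
  set n := ⌊R / (2 * (d + 1))⌋₊
  have hRn : R / (2 * (d + 1)) < n + 1 := Nat.lt_floor_add_one _
  have hnR : (n : ℝ) ≤ R / (2 * (d + 1)) := Nat.floor_le (by positivity)
  have hball : d * n < R := by
    rw [le_div_iff₀ (by positivity)] at hnR
    nlinarith
  calc ENNReal.ofReal ((ε / (4 * (d + 1))) ^ Fintype.card ι * R ^ Fintype.card ι)
      ≤ ENNReal.ofReal ((n * ε) ^ Fintype.card ι) := by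
        rw [← mul_pow]
        refine ENNReal.ofReal_le_ofReal (pow_le_pow_left₀ (by positivity) ?_ _)
        rw [div_mul_eq_mul_div, div_le_iff₀ (by positivity)]
        rw [div_lt_iff₀ (by positivity)] at hRn
        nlinarith
    _ = volume (combBox ι n ε) := (volume_combBox n hε₀.le (min_le_right _ _)).symm
    _ ≤ volume (latticeThickening ι r ∩ ball 0 R) := measure_mono <|
        subset_inter (combBox_subset_latticeThickening n hεr)
          ((combBox_subset_closedBall n (min_le_right _ _)).trans (closedBall_subset_ball hball))

end LatticeThickening

theorem thickened_lattice_l1_general (d : ℕ)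
    (A : Set (EuclideanSpace ℝ (Fin d)))
    (hA : A = ⋃ z ∈ {z : EuclideanSpace ℝ (Fin d) | ∀ i, ∃ m : ℤ, z i = m},
      {y : EuclideanSpace ℝ (Fin d) | (∑ i, |y i - z i|) < 1/8}) :
    0 < Filter.limsup
        (fun R : ℝ => volume (A ∩ Metric.ball (0 : EuclideanSpace ℝ (Fin d)) R) /
          volume (Metric.ball (0 : EuclideanSpace ℝ (Fin d)) R)) Filter.atTop ∧
    ∀ x ∈ A, ∀ y ∈ A, ∀ k : ℤ, (∑ i, |x i - y i|) ≠ (k : ℝ) + 1/2 := by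
  change A = latticeThickening (Fin d) (1 / 8) at hA
  subst hA
  refine ⟨?_, fun x hx y hy => sum_abs_sub_ne_intCast_add_half (by norm_num) hx hy⟩
  obtain ⟨c, hc, hvol⟩ := eventually_le_volume_latticeThickening_inter_ball (ι := Fin d)
    (by norm_num : (0 : ℝ) < 1 / 8)
  refine limsup_measure_inter_ball_div_pos volume hc ?_
  simpa only [finrank_euclideanSpace] using hvol

/-- Let `d ≥ 1` and let `A` be the integer lattice in `ℝ^d` thickened
by `1/8` in the `ℓ^1` norm (expressed via `∑ i, |y i - z i|`). Then `A` has positive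
upper density with respect to Lebesgue measure (with Euclidean balls `B_R`), yet
`‖x − y‖_1 ≠ k + 1/2` for all `x, y ∈ A` and all integers `k`. -/
theorem thickened_lattice_l1 (d : ℕ) (hd : 1 ≤ d)
    (A : Set (EuclideanSpace ℝ (Fin d)))
    (hA : A = ⋃ z ∈ {z : EuclideanSpace ℝ (Fin d) | ∀ i, ∃ m : ℤ, z i = m},
      {y : EuclideanSpace ℝ (Fin d) | (∑ i, |y i - z i|) < 1/8}) :
    0 < Filter.limsup
        (fun R : ℝ => volume (A ∩ Metric.ball (0 : EuclideanSpace ℝ (Fin d)) R) /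
          volume (Metric.ball (0 : EuclideanSpace ℝ (Fin d)) R)) Filter.atTop ∧
    ∀ x ∈ A, ∀ y ∈ A, ∀ k : ℤ, (∑ i, |x i - y i|) ≠ (k : ℝ) + 1/2 :=
  thickened_lattice_l1_general d A hA
end
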